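/- One has lim_{k→∞} 2^{k+1}·(1 − c_k) = π. -/

import Mathlib

/-!
Since `√(2 + 2 cos θ) = 2 cos (θ / 2)`, the nested radicals are `a k = 2 cos (π / 2 ^ (k + 1))`,
and half-angle formulas give `b k = tan (π / 2 ^ (k + 2))`. The recurrence for `c` is the tangent
addition formula, so `c k = tan (π / 4 - π / 2 ^ (k + 2))`. Hence `2 ^ (k + 1) * (1 - c k)` is
`π / 2` times the slope of `tan` between `π / 4 - π / 2 ^ (k + 2)` and `π / 4`, which tends to
`(π / 2) * tan' (π / 4) = (π / 2) * 2 = π`.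
-/

open Real Filter Topology

namespace Real

lemma tan_add_of_cos_ne_zero {x y : ℝ} (hx : cos x ≠ 0) (hy : cos y ≠ 0) :
    tan (x + y) = (tan x + tan y) / (1 - tan x * tan y) :=
  tan_add' ⟨fun k h => hx (cos_eq_zero_iff.2 ⟨k, h⟩), fun l h => hy (cos_eq_zero_iff.2 ⟨l, h⟩)⟩

lemma tan_pi_over_two_pow_succ (n : ℕ) :
    tan (π / 2 ^ (n + 2)) = √(2 - sqrtTwoAddSeries 0 n) / sqrtTwoAddSeries 0 (n + 1) := by
  rw [tan_eq_sin_div_cos, sin_pi_over_two_pow_succ, cos_pi_over_two_pow (n + 1),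
    div_div_div_cancel_right₀ two_ne_zero]

lemma hasDerivAt_tan_pi_div_four : HasDerivAt tan 2 (π / 4) := by
  have h : (√2 / 2) ^ 2 = (1 / 2 : ℝ) := by rw [div_pow, sq_sqrt zero_le_two]; norm_num
  simpa [h] using hasDerivAt_tan (x := π / 4) (by simp)

lemma pi_div_two_pow_lt_pi_div_two_pow {m n : ℕ} (h : m < n) : π / 2 ^ n < π / 2 ^ m :=
  div_lt_div_of_pos_left pi_pos (by positivity) (pow_lt_pow_right₀ one_lt_two h)

end Real

lemma eq_sqrtTwoAddSeries_of_rec {a : ℕ → ℝ} (ha1 : a 1 = √2)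
    (ha : ∀ k ≥ 1, a (k + 1) = √(2 + a k)) : ∀ k ≥ 1, a k = sqrtTwoAddSeries 0 k := by
  intro k hk
  induction k, hk using Nat.le_induction with
  | base => simpa using ha1
  | succ k hk ih => rw [ha k hk, ih, sqrtTwoAddSeries]

lemma eq_tan_pi_div_four_sub_of_rec {b c : ℕ → ℝ} (hb : ∀ k ≥ 1, b k = tan (π / 2 ^ (k + 2)))
    (hc1 : c 1 = b 1) (hc : ∀ k ≥ 1, c (k + 1) = (c k + b (k + 1)) / (1 - c k * b (k + 1))) :
    ∀ k ≥ 1, c k = tan (π / 4 - π / 2 ^ (k + 2)) := by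
  intro k hk
  induction k, hk using Nat.le_induction with
  | base => rw [hc1, hb 1 le_rfl]; congr 1; norm_num; ring
  | succ k hk ih =>
    have hα := pi_div_two_pow_lt_pi_div_two_pow (show 2 < k + 2 by omega)
    have hβ := pi_div_two_pow_lt_pi_div_two_pow (show 1 < k + 1 + 2 by omega)
    have hα_pos : 0 < π / 2 ^ (k + 2) := by positivity
    have hβ_pos : 0 < π / 2 ^ (k + 1 + 2) := by positivity
    rw [hc k hk, ih, hb (k + 1) (by omega), ← tan_add_of_cos_ne_zero]
    · congr 1; ring
    all_goals exact (cos_pos_of_mem_Ioo ⟨by linarith [pi_pos], by linarith [pi_pos]⟩).ne'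

lemma tendsto_two_pow_mul_one_sub_tan_pi_div_four_sub :
    Tendsto (fun k : ℕ => 2 ^ (k + 1) * (1 - tan (π / 4 - π / 2 ^ (k + 2)))) atTop (𝓝 π) := by
  have hx : Tendsto (fun k : ℕ => π / 2 ^ (k + 2)) atTop (𝓝 0) :=
    tendsto_const_nhds.div_atTop
      ((tendsto_pow_atTop_atTop_of_one_lt one_lt_two).comp (tendsto_add_atTop_nat 2))
  have hy : Tendsto (fun k : ℕ => π / 4 - π / 2 ^ (k + 2)) atTop (𝓝[≠] (π / 4)) :=
    tendsto_nhdsWithin_iff.2 ⟨by simpa using (tendsto_const_nhds (x := π / 4)).sub hx,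
      Eventually.of_forall fun k => by simp⟩
  have hslope := (hasDerivAt_iff_tendsto_slope.1 hasDerivAt_tan_pi_div_four).comp hy
  convert hslope.const_mul (π / 2) using 1
  · ext k
    simp only [Function.comp_apply, slope_def_field, tan_pi_div_four, sub_sub_cancel_left]
    field_simp
    ring
  · rw [div_mul_cancel₀ π two_ne_zero]

theorem two_pow_mul_error_tendsto_pi (a : ℕ → ℝ)
    (ha1 : a 1 = Real.sqrt 2)
    (ha : ∀ k ≥ 1, a (k + 1) = Real.sqrt (2 + a k))
    (b : ℕ → ℝ)
    (hb : ∀ k ≥ 1, b k = Real.sqrt (2 - a k) / a (k + 1))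
    (c : ℕ → ℝ)
    (hc1 : c 1 = b 1)
    (hc : ∀ k ≥ 1, c (k + 1) = (c k + b (k + 1)) / (1 - c k * b (k + 1))) :
    Tendsto (fun k : ℕ => 2 ^ (k + 1) * (1 - c k)) atTop (𝓝 π) := by
  have ha' := eq_sqrtTwoAddSeries_of_rec ha1 ha
  have hb' : ∀ k ≥ 1, b k = tan (π / 2 ^ (k + 2)) := fun k hk => by
    rw [hb k hk, ha' k hk, ha' (k + 1) (by omega), tan_pi_over_two_pow_succ]
  have hc' := eq_tan_pi_div_four_sub_of_rec hb' hc1 hc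
  refine tendsto_two_pow_mul_one_sub_tan_pi_div_four_sub.congr' ?_
  filter_upwards [eventually_ge_atTop 1] with k hk
  rw [hc' k hk]
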